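/- arXiv:2604.25969 — 2 statements merged into one kernel-verified Lean document; each statement's English description precedes it below -/
import Mathlib

section
/- Let m ≥ 2 be a natural number, B > 0 a real number, and L : ℕ → ℝ a function such that for every prime p one has |L(p) − 1| ≤ 2·B·p^{−(m+1)/2}. Then for every natural number P ≥ 2, the tail sum over primes satisfies ∑_{p prime, p > P} |L(p) − 1| ≤ (4·B/(m−1))·(P−1)^{−(m−1)/2}. -/
/-! Compare with the p-series: |L p - 1| ≤ 2B p^{-s} with s = (m+1)/2 > 1, and the sum of n^{-s}
over the integers n > P is at most ∫_P^∞ x^{-s} dx = P^{1-s}/(s-1), since x ↦ x^{-s} is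
decreasing. With 1 - s = -(m-1)/2 this is 4B/(m-1) · P^{-(m-1)/2} ≤ 4B/(m-1) · (P-1)^{-(m-1)/2}. -/

open Finset MeasureTheory

section RpowTail

variable {x₀ s : ℝ}

theorem sum_range_rpow_neg_le_integral_Ioi (hx₀ : 0 < x₀) (hs : 1 < s) (n : ℕ) :
    ∑ i ∈ range n, (x₀ + (i + 1 : ℕ)) ^ (-s) ≤ x₀ ^ (1 - s) / (s - 1) := by
  have hexp : -s < -1 := by linarith
  have hanti : AntitoneOn (fun x : ℝ => x ^ (-s)) (Set.Icc x₀ (x₀ + n)) :=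
    fun x hx y _ hxy => Real.rpow_le_rpow_of_nonpos (hx₀.trans_le hx.1) hxy (by linarith)
  have hIoi : ∫ x in Set.Ioi x₀, x ^ (-s) = x₀ ^ (1 - s) / (s - 1) := by
    rw [integral_Ioi_rpow_of_lt hexp hx₀, neg_div, ← div_neg]
    ring_nf
  calc ∑ i ∈ range n, (x₀ + (i + 1 : ℕ)) ^ (-s)
      ≤ ∫ x in x₀..x₀ + n, x ^ (-s) := hanti.sum_le_integral
    _ = ∫ x in Set.Ioc x₀ (x₀ + n), x ^ (-s) :=
        intervalIntegral.integral_of_le (by simp)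
    _ ≤ ∫ x in Set.Ioi x₀, x ^ (-s) := by
        refine setIntegral_mono_set (integrableOn_Ioi_rpow_of_lt hexp hx₀) ?_
          Set.Ioc_subset_Ioi_self.eventuallyLE
        filter_upwards [ae_restrict_mem measurableSet_Ioi] with x hx
        exact Real.rpow_nonneg (hx₀.trans hx).le _
    _ = x₀ ^ (1 - s) / (s - 1) := hIoi

theorem summable_rpow_neg_shift (hx₀ : 0 < x₀) (hs : 1 < s) :
    Summable (fun i : ℕ => (x₀ + (i + 1 : ℕ)) ^ (-s)) :=
  summable_of_sum_range_le (fun _ => by positivity) (sum_range_rpow_neg_le_integral_Ioi hx₀ hs)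

theorem tsum_rpow_neg_shift_le (hx₀ : 0 < x₀) (hs : 1 < s) :
    ∑' i : ℕ, (x₀ + (i + 1 : ℕ)) ^ (-s) ≤ x₀ ^ (1 - s) / (s - 1) :=
  Real.tsum_le_of_sum_range_le (fun _ => by positivity) (sum_range_rpow_neg_le_integral_Ioi hx₀ hs)

end RpowTail

section NatTail

variable {P : ℕ} {q : ℕ → Prop} {s : ℝ}

theorem natCast_eq_add_shift {n : ℕ} (h : P < n) :
    (n : ℝ) = P + ((n - (P + 1) + 1 : ℕ) : ℝ) := by
  rw [← Nat.cast_add]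
  congr 1
  omega

theorem summable_and_tsum_rpow_neg_le_of_lt (hP : 0 < P) (hs : 1 < s)
    (hq : ∀ n, q n → P < n) :
    Summable (fun n : {n : ℕ // q n} => (n : ℝ) ^ (-s)) ∧
      ∑' n : {n : ℕ // q n}, (n : ℝ) ^ (-s) ≤ (P : ℝ) ^ (1 - s) / (s - 1) := by
  have hP' : (0 : ℝ) < P := by exact_mod_cast hP
  set shift : {n : ℕ // q n} → ℕ := fun n => n - (P + 1)
  have hshift : Function.Injective shift := fun a b hab =>
    Subtype.ext (by have := hq a a.2; have := hq b b.2; simp only [shift] at hab; omega)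
  have hcomp : (fun n : {n : ℕ // q n} => (n : ℝ) ^ (-s)) =
      (fun i : ℕ => ((P : ℝ) + (i + 1 : ℕ)) ^ (-s)) ∘ shift := by
    funext n
    simp only [Function.comp_apply, shift, ← natCast_eq_add_shift (hq n n.2)]
  rw [hcomp]
  refine ⟨(summable_rpow_neg_shift hP' hs).comp_injective hshift, ?_⟩
  exact (tsum_comp_le_tsum_of_inj (summable_rpow_neg_shift hP' hs) (fun _ => by positivity)
    hshift).trans (tsum_rpow_neg_shift_le hP' hs)

end NatTail

theorem tail_sum_bound (m : ℕ) (hm : 2 ≤ m) (B : ℝ) (hB : 0 < B) (L : ℕ → ℝ)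
    (hL : ∀ p : ℕ, p.Prime → |L p - 1| ≤ 2 * B * (p : ℝ) ^ (-(((m : ℝ) + 1) / 2))) :
    ∀ P : ℕ, 2 ≤ P →
      Summable (fun p : {p : ℕ // p.Prime ∧ P < p} => |L p.1 - 1|) ∧
      (∑' p : {p : ℕ // p.Prime ∧ P < p}, |L p.1 - 1|)
        ≤ (4 * B / ((m : ℝ) - 1)) * ((P : ℝ) - 1) ^ (-(((m : ℝ) - 1) / 2)) := by
  intro P hP
  have hm' : (2 : ℝ) ≤ m := by exact_mod_cast hm
  have hP' : (2 : ℝ) ≤ P := by exact_mod_cast hP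
  obtain ⟨hsum, htsum⟩ := summable_and_tsum_rpow_neg_le_of_lt (q := fun p => p.Prime ∧ P < p)
    (by omega) (by linarith : 1 < ((m : ℝ) + 1) / 2) (fun _ hp => hp.2)
  have hbound : ∀ p : {p : ℕ // p.Prime ∧ P < p},
      |L p.1 - 1| ≤ 2 * B * (p : ℝ) ^ (-(((m : ℝ) + 1) / 2)) := fun p => hL p p.2.1
  have habs := (hsum.mul_left (2 * B)).of_nonneg_of_le (fun _ => abs_nonneg _) hbound
  refine ⟨habs, ?_⟩
  calc ∑' p : {p : ℕ // p.Prime ∧ P < p}, |L p.1 - 1|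
      ≤ 2 * B * ∑' p : {p : ℕ // p.Prime ∧ P < p}, (p : ℝ) ^ (-(((m : ℝ) + 1) / 2)) := by
        rw [← tsum_mul_left]
        exact habs.tsum_le_tsum hbound (hsum.mul_left _)
    _ ≤ 2 * B * ((P : ℝ) ^ (1 - ((m : ℝ) + 1) / 2) / (((m : ℝ) + 1) / 2 - 1)) :=
        mul_le_mul_of_nonneg_left htsum (by positivity)
    _ = 4 * B / ((m : ℝ) - 1) * (P : ℝ) ^ (-(((m : ℝ) - 1) / 2)) := by
        field_simp
        ring_nf
    _ ≤ 4 * B / ((m : ℝ) - 1) * ((P : ℝ) - 1) ^ (-(((m : ℝ) - 1) / 2)) := by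
        refine mul_le_mul_of_nonneg_left ?_ (div_nonneg (by positivity) (by linarith))
        exact Real.rpow_le_rpow_of_nonpos (by linarith) (by linarith) (by linarith)
end

section
/- Let m ≥ 2 be a natural number, B > 0, P ≥ 2 a natural number, and L : ℕ → ℝ a function such that L(p) > 0 and |L(p) − 1| ≤ 1/2 for every prime p, and |L(p) − 1| ≤ 2·B·p^{−(m+1)/2} for every prime p. Set S := (4·B/(m−1))·(P−1)^{−(m−1)/2} and assume S ≤ (log 2)/2. Then the infinite product C := ∏'_{p prime} L(p) converges (is multipliable), is positive, and the truncation C_P := ∏_{p prime, p ≤ P} L(p) satisfies |C − C_P| ≤ C · 2·S, i.e. the relative error is at most (8·B/(m−1))·(P−1)^{−(m−1)/2}. -/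
open Finset

lemma aux_prod_lower {β : Type*} (F : Finset β) (f : β → ℝ) (h0 : ∀ i ∈ F, 0 ≤ f i) :
    1 - ∑ i ∈ F, |f i - 1| ≤ ∏ i ∈ F, f i := by
  classical
  induction F using Finset.induction_on with
  | empty => simp
  | @insert a F ha ih =>
    rw [Finset.prod_insert ha, Finset.sum_insert ha]
    have h0a : 0 ≤ f a := h0 a (Finset.mem_insert_self a F)
    have hF : ∀ i ∈ F, 0 ≤ f i := fun i hi => h0 i (Finset.mem_insert_of_mem hi)
    have hp := ih hF
    have hW : 0 ≤ ∑ i ∈ F, |f i - 1| := Finset.sum_nonneg fun i _ => abs_nonneg _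
    have hprod : (0:ℝ) ≤ ∏ i ∈ F, f i := Finset.prod_nonneg hF
    have hva : 1 - f a ≤ |f a - 1| := by
      have := neg_abs_le (f a - 1); linarith [this]
    have hva0 : 0 ≤ |f a - 1| := abs_nonneg _
    by_cases hc : 1 - ∑ i ∈ F, |f i - 1| ≤ 0
    · nlinarith [mul_nonneg h0a hprod]
    · push_neg at hc
      have h1 : f a * (1 - ∑ i ∈ F, |f i - 1|) ≤ f a * ∏ i ∈ F, f i :=
        mul_le_mul_of_nonneg_left hp h0a
      nlinarith [mul_le_mul_of_nonneg_right hva hc.le]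

lemma aux_prod_upper {β : Type*} (F : Finset β) (f : β → ℝ) (h0 : ∀ i ∈ F, 0 ≤ f i) :
    ∏ i ∈ F, f i ≤ Real.exp (∑ i ∈ F, |f i - 1|) := by
  rw [Real.exp_sum]
  refine Finset.prod_le_prod h0 fun i _ => ?_
  calc f i ≤ 1 + |f i - 1| := by linarith [le_abs_self (f i - 1)]
    _ ≤ Real.exp |f i - 1| := by
        have := Real.add_one_le_exp (|f i - 1|); linarith

lemma aux_abs_log {x : ℝ} (hx : 0 < x) (h : |x - 1| ≤ 1 / 2) : |Real.log x| ≤ 2 * |x - 1| := by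
  have hx2 : (1:ℝ)/2 ≤ x := by
    have := neg_abs_le (x - 1); linarith
  rw [abs_le]
  constructor
  · have h1 : Real.log x⁻¹ ≤ x⁻¹ - 1 := Real.log_le_sub_one_of_pos (inv_pos.2 hx)
    rw [Real.log_inv] at h1
    have h2 : x⁻¹ - 1 = (1 - x) / x := by field_simp
    have h3 : (1 - x) / x ≤ 2 * |x - 1| := by
      rw [div_le_iff₀ hx]
      have h4 : 1 - x ≤ |x - 1| := by have := neg_abs_le (x - 1); linarith
      nlinarith [abs_nonneg (x - 1)]
    linarith [h1, h2 ▸ h1]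
  · have h1 : Real.log x ≤ x - 1 := Real.log_le_sub_one_of_pos hx
    have h2 : x - 1 ≤ |x - 1| := le_abs_self _
    linarith [abs_nonneg (x - 1)]

lemma aux_Q_bound {Q t S : ℝ} (ht0 : 0 ≤ t) (htS : t ≤ S) (hS : S ≤ Real.log 2 / 2)
    (h1 : 1 - t ≤ Q) (h2 : Q ≤ Real.exp t) : |Q - 1| ≤ 2 * S * Q := by
  have hS0 : 0 ≤ S := le_trans ht0 htS
  have hShalf : S < 1/2 := by
    have := Real.log_two_lt_d9; norm_num at this ⊢; linarith
  have hE2 : Real.exp t ≤ 2 := by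
    calc Real.exp t ≤ Real.exp (Real.log 2) := Real.exp_le_exp.2 (by
          have h0 : (0:ℝ) ≤ Real.log 2 := Real.log_nonneg one_le_two
          linarith)
      _ = 2 := Real.exp_log two_pos
  have hE1 : Real.exp t * (1 - t) ≤ 1 := by
    have h3 := Real.add_one_le_exp (-t)
    rw [Real.exp_neg] at h3
    have h4 : Real.exp t * (1 - t) ≤ Real.exp t * (Real.exp t)⁻¹ :=
      mul_le_mul_of_nonneg_left (by linarith) (Real.exp_pos t).le
    rwa [mul_inv_cancel₀ (Real.exp_pos t).ne'] at h4
  rcases abs_cases (Q - 1) with ⟨heq, hQ1⟩ | ⟨heq, hQ1⟩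
  · rw [heq]
    have hQge : 1 ≤ Q := by linarith
    have : Q - 1 ≤ Real.exp t - 1 := by linarith
    nlinarith [Real.exp_pos t]
  · rw [heq]
    nlinarith

set_option maxHeartbeats 2000000 in
theorem truncated_singular_product_error (m : ℕ) (hm : 2 ≤ m) (B : ℝ) (hB : 0 < B)
    (P : ℕ) (hP : 2 ≤ P) (L : ℕ → ℝ)
    (hpos : ∀ p : ℕ, p.Prime → 0 < L p)
    (hhalf : ∀ p : ℕ, p.Prime → |L p - 1| ≤ 1 / 2)
    (hdecay : ∀ p : ℕ, p.Prime → |L p - 1| ≤ 2 * B * (p : ℝ) ^ (-(((m : ℝ) + 1) / 2)))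
    (hS : (4 * B / ((m : ℝ) - 1)) * ((P : ℝ) - 1) ^ (-(((m : ℝ) - 1) / 2)) ≤ Real.log 2 / 2) :
    Multipliable (fun p : {p : ℕ // p.Prime} => L p.1) ∧
    0 < (∏' p : {p : ℕ // p.Prime}, L p.1) ∧
    |(∏' p : {p : ℕ // p.Prime}, L p.1) -
        ∏ p ∈ (Finset.range (P + 1)).filter Nat.Prime, L p|
      ≤ (∏' p : {p : ℕ // p.Prime}, L p.1) *
          (2 * ((4 * B / ((m : ℝ) - 1)) * ((P : ℝ) - 1) ^ (-(((m : ℝ) - 1) / 2)))) := by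
  classical
  set e : ℝ := ((m : ℝ) + 1) / 2 with he_def
  set S : ℝ := (4 * B / ((m : ℝ) - 1)) * ((P : ℝ) - 1) ^ (-(((m : ℝ) - 1) / 2)) with hS_def
  have hm1 : (1:ℝ) ≤ (m:ℝ) - 1 := by
    have : (2:ℝ) ≤ (m:ℝ) := by exact_mod_cast hm
    linarith
  have hP2 : (2:ℝ) ≤ (P:ℝ) := by exact_mod_cast hP
  have hP1 : (0:ℝ) < (P:ℝ) - 1 := by linarith
  have he1 : (1:ℝ) < e := by rw [he_def]; linarith
  -- summability of the majorant
  have hnat : Summable (fun n : ℕ => (n:ℝ) ^ (-e)) :=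
    Real.summable_nat_rpow.mpr (by linarith)
  have hι : Summable (fun p : {p : ℕ // p.Prime} => ((p.1 : ℕ):ℝ) ^ (-e)) :=
    hnat.comp_injective Subtype.val_injective
  have hv : Summable (fun p : {p : ℕ // p.Prime} => |L p.1 - 1|) :=
    Summable.of_nonneg_of_le (fun p => abs_nonneg _) (fun p => hdecay p.1 p.2)
      (hι.mul_left (2*B))
  have hlog : Summable (fun p : {p : ℕ // p.Prime} => Real.log (L p.1)) := by
    apply Summable.of_norm_bounded (hv.mul_left 2)
    intro p
    rw [Real.norm_eq_abs]
    exact aux_abs_log (hpos p.1 p.2) (hhalf p.1 p.2)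
  have hMult : Multipliable (fun p : {p : ℕ // p.Prime} => L p.1) := by
    exact Real.multipliable_of_summable_log (fun p => hpos p.1 p.2) hlog
  set s0 : Finset ℕ := (Finset.range (P + 1)).filter Nat.Prime with hs0_def
  set sP : Finset {p : ℕ // p.Prime} := s0.subtype Nat.Prime with hsP_def
  have hprod_eq : ∏ x ∈ sP, L x.1 = ∏ p ∈ s0, L p := by
    rw [hsP_def, Finset.prod_subtype_eq_prod_filter]
    congr 1
    rw [hs0_def, Finset.filter_filter]
    simp
  have hlogK : Summable ((fun p : {p : ℕ // p.Prime} => Real.log (L p.1)) ∘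
      ((↑) : ↑((sP : Set {p : ℕ // p.Prime}))ᶜ → {p : ℕ // p.Prime})) :=
    hlog.subtype _
  have hMK : Multipliable (fun x : ↑((sP : Set {p : ℕ // p.Prime}))ᶜ =>
      L (x : {p : ℕ // p.Prime}).1) := by
    exact Real.multipliable_of_summable_log
      (fun x => hpos _ (x : {p : ℕ // p.Prime}).2) hlogK
  have hsplit : (∏ x ∈ sP, L x.1) *
      (∏' x : ↑((sP : Set {p : ℕ // p.Prime}))ᶜ, L (x : {p : ℕ // p.Prime}).1)
      = ∏' p : {p : ℕ // p.Prime}, L p.1 := by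
    have h1 := Multipliable.tprod_mul_tprod_compl (f := fun p : {p : ℕ // p.Prime} => L p.1)
      (s := (↑sP : Set {p : ℕ // p.Prime})) Multipliable.of_finite hMK
    rwa [Finset.tprod_subtype' sP (fun p : {p : ℕ // p.Prime} => L p.1)] at h1
  set Q : ℝ := ∏' x : ↑((sP : Set {p : ℕ // p.Prime}))ᶜ, L (x : {p : ℕ // p.Prime}).1 with hQ_def
  have hvK : Summable (fun x : ↑((sP : Set {p : ℕ // p.Prime}))ᶜ =>
      |L (x : {p : ℕ // p.Prime}).1 - 1|) := hv.subtype _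
  set t : ℝ := ∑' x : ↑((sP : Set {p : ℕ // p.Prime}))ᶜ,
      |L (x : {p : ℕ // p.Prime}).1 - 1| with ht_def
  have ht0 : 0 ≤ t := tsum_nonneg fun _ => abs_nonneg _
  have hKge : ∀ x : ↑((sP : Set {p : ℕ // p.Prime}))ᶜ,
      P + 1 ≤ (x : {p : ℕ // p.Prime}).1 := by
    intro x
    have hx := x.2
    simp only [Set.mem_compl_iff, Finset.mem_coe, hsP_def, Finset.mem_subtype] at hx
    by_contra hlt
    push_neg at hlt
    exact hx (by
      rw [hs0_def]
      exact Finset.mem_filter.2 ⟨Finset.mem_range.2 hlt, (x : {p : ℕ // p.Prime}).2⟩)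
  -- the arithmetic comparison function
  set g : ℕ → ℝ := fun n => if P + 1 ≤ n then 2*B*(n:ℝ)^(-e) else 0 with hg_def
  have hg0 : ∀ n, 0 ≤ g n := by
    intro n
    rw [hg_def]
    dsimp only
    split
    · positivity
    · exact le_rfl
  have hgsum : Summable g := by
    apply Summable.of_nonneg_of_le hg0 _ (hnat.mul_left (2*B))
    intro n
    rw [hg_def]
    dsimp only
    split
    · exact le_rfl
    · positivity
  have hinj : Function.Injective
      (fun x : ↑((sP : Set {p : ℕ // p.Prime}))ᶜ => (x : {p : ℕ // p.Prime}).1) :=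
    fun a b h => Subtype.ext (Subtype.ext h)
  have ht_le : t ≤ ∑' n, g n := by
    rw [ht_def]
    apply Summable.tsum_le_tsum_of_inj _ hinj (fun c _ => hg0 c) _ hvK hgsum
    intro x
    rw [hg_def]
    dsimp only
    rw [if_pos (hKge x)]
    exact hdecay _ (x : {p : ℕ // p.Prime}).2
  -- partial sums of g are bounded by S
  have hpartial : ∀ N : ℕ, ∑ n ∈ Finset.range N, g n ≤ S := by
    intro N
    have step1 : ∑ n ∈ Finset.range N, g n
        = ∑ n ∈ Finset.Ico (P+1) N, 2*B*(n:ℝ)^(-e) := by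
      rw [hg_def]
      rw [← Finset.sum_filter]
      congr 1
      ext n
      simp only [Finset.mem_filter, Finset.mem_range, Finset.mem_Ico]
      omega
    have step2 : ∑ n ∈ Finset.Ico (P+1) N, 2*B*(n:ℝ)^(-e)
        = ∑ i ∈ Finset.range (N - (P+1)), 2*B*(((P+1+i : ℕ)):ℝ)^(-e) := by
      rw [Finset.sum_Ico_eq_sum_range]
    have step3 : ∑ i ∈ Finset.range (N - (P+1)), 2*B*(((P+1+i : ℕ)):ℝ)^(-e)
        ≤ ∑ i ∈ Finset.range N, 2*B*(((P+1+i : ℕ)):ℝ)^(-e) := by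
      apply Finset.sum_le_sum_of_subset_of_nonneg
        (Finset.range_subset_range.2 (Nat.sub_le _ _))
      intro i _ _
      positivity
    have step4 : ∑ i ∈ Finset.range N, 2*B*(((P+1+i : ℕ)):ℝ)^(-e)
        = 2*B * ∑ i ∈ Finset.range N, ((P:ℝ) + ((i+1 : ℕ) : ℝ))^(-e) := by
      rw [Finset.mul_sum]
      apply Finset.sum_congr rfl
      intro i _
      congr 1
      push_cast
      ring
    have hanti : AntitoneOn (fun x : ℝ => x ^ (-e))
        (Set.Icc (P:ℝ) ((P:ℝ) + (N:ℕ))) := by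
      intro x hx y hy hxy
      exact Real.rpow_le_rpow_of_nonpos (lt_of_lt_of_le (by linarith) hx.1) hxy
        (by linarith)
    have step5 := AntitoneOn.sum_le_integral hanti
    have hne : (-e : ℝ) ≠ -1 := by intro h; linarith
    have h0notin : (0:ℝ) ∉ Set.uIcc (P:ℝ) ((P:ℝ) + N) := by
      rw [Set.uIcc_of_le (le_add_of_nonneg_right (Nat.cast_nonneg N))]
      intro h
      have := (Set.mem_Icc.1 h).1
      linarith
    have step6 : ∫ x in (P:ℝ)..((P:ℝ) + N), x ^ (-e)
        = (((P:ℝ)+N)^(-e+1) - (P:ℝ)^(-e+1))/(-e+1) :=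
      integral_rpow (Or.inr ⟨hne, h0notin⟩)
    have step7 : (((P:ℝ)+N)^(-e+1) - (P:ℝ)^(-e+1))/(-e+1)
        ≤ (P:ℝ)^(-e+1)/(e-1) := by
      have h1 : (0:ℝ) ≤ ((P:ℝ)+N)^(-e+1) := Real.rpow_nonneg (by positivity) _
      have key : (((P:ℝ)+N)^(-e+1) - (P:ℝ)^(-e+1))/(-e+1)
          = ((P:ℝ)^(-e+1) - ((P:ℝ)+N)^(-e+1))/(e-1) := by
        rw [show (-e+1:ℝ) = -(e-1) by ring, div_neg]
        ring
      rw [key]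
      exact (div_le_div_iff_of_pos_right (by linarith : (0:ℝ) < e - 1)).2 (by linarith)
    have step8 : 2*B * ((P:ℝ)^(-e+1)/(e-1)) ≤ S := by
      have hexp : (-e+1 : ℝ) = -(((m:ℝ)-1)/2) := by rw [he_def]; ring
      have hPle : (P:ℝ)^(-e+1) ≤ ((P:ℝ)-1)^(-(((m:ℝ)-1)/2)) := by
        rw [hexp]
        exact Real.rpow_le_rpow_of_nonpos hP1 (by linarith) (by linarith)
      have he2 : e - 1 = ((m:ℝ)-1)/2 := by rw [he_def]; ring
      rw [hS_def, he2]
      calc 2*B * ((P:ℝ)^(-e+1)/(((m:ℝ)-1)/2))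
          = (4*B/((m:ℝ)-1)) * (P:ℝ)^(-e+1) := by
            field_simp
            ring
        _ ≤ (4*B/((m:ℝ)-1)) * ((P:ℝ)-1)^(-(((m:ℝ)-1)/2)) := by
            apply mul_le_mul_of_nonneg_left hPle
            apply div_nonneg (by linarith) (by linarith)
    calc ∑ n ∈ Finset.range N, g n
        = ∑ n ∈ Finset.Ico (P+1) N, 2*B*(n:ℝ)^(-e) := step1
      _ = ∑ i ∈ Finset.range (N - (P+1)), 2*B*(((P+1+i : ℕ)):ℝ)^(-e) := step2
      _ ≤ ∑ i ∈ Finset.range N, 2*B*(((P+1+i : ℕ)):ℝ)^(-e) := step3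
      _ = 2*B * ∑ i ∈ Finset.range N, ((P:ℝ) + ((i+1 : ℕ) : ℝ))^(-e) := step4
      _ ≤ 2*B * ∫ x in (P:ℝ)..((P:ℝ) + N), x ^ (-e) := by
            apply mul_le_mul_of_nonneg_left step5 (by linarith)
      _ = 2*B * ((((P:ℝ)+N)^(-e+1) - (P:ℝ)^(-e+1))/(-e+1)) := by rw [step6]
      _ ≤ 2*B * ((P:ℝ)^(-e+1)/(e-1)) := by
            apply mul_le_mul_of_nonneg_left step7 (by linarith)
      _ ≤ S := step8
  have hgS : ∑' n, g n ≤ S := Real.tsum_le_of_sum_range_le hg0 hpartial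
  have htS : t ≤ S := ht_le.trans hgS
  -- bounds on the tail product Q
  have hQprod := hMK.hasProd
  have hQlow : 1 - t ≤ Q := by
    apply ge_of_tendsto hQprod
    apply Filter.Eventually.of_forall
    intro F
    have h := aux_prod_lower F _ (fun i _ => (hpos _ (i : {p : ℕ // p.Prime}).2).le)
    have h2 := Summable.sum_le_tsum F (fun i _ => abs_nonneg (L (i : {p : ℕ // p.Prime}).1 - 1)) hvK
    rw [← ht_def] at h2
    linarith
  have hQup : Q ≤ Real.exp t := by
    apply le_of_tendsto hQprod
    apply Filter.Eventually.of_forall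
    intro F
    have h := aux_prod_upper F _ (fun i _ => (hpos _ (i : {p : ℕ // p.Prime}).2).le)
    have h2 := Summable.sum_le_tsum F (fun i _ => abs_nonneg (L (i : {p : ℕ // p.Prime}).1 - 1)) hvK
    rw [← ht_def] at h2
    exact h.trans (Real.exp_le_exp.2 h2)
  have hShalf : S < 1/2 := by
    have := Real.log_two_lt_d9; norm_num at this ⊢; linarith
  have hQpos : 0 < Q := by linarith
  have hCp_pos : 0 < ∏ p ∈ s0, L p := by
    apply Finset.prod_pos
    intro p hp
    rw [hs0_def] at hp
    exact hpos p (Finset.mem_filter.1 hp).2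
  have hC : (∏' p : {p : ℕ // p.Prime}, L p.1) = (∏ p ∈ s0, L p) * Q := by
    rw [← hsplit, hprod_eq, hQ_def]
  refine ⟨hMult, ?_, ?_⟩
  · rw [hC]; exact mul_pos hCp_pos hQpos
  · rw [hC]
    have hb := aux_Q_bound ht0 htS hS hQlow hQup
    have habs : |(∏ p ∈ s0, L p) * Q - (∏ p ∈ s0, L p)|
        = (∏ p ∈ s0, L p) * |Q - 1| := by
      rw [show (∏ p ∈ s0, L p) * Q - (∏ p ∈ s0, L p)
            = (∏ p ∈ s0, L p) * (Q - 1) by ring, abs_mul, abs_of_pos hCp_pos]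
    rw [habs]
    calc (∏ p ∈ s0, L p) * |Q - 1| ≤ (∏ p ∈ s0, L p) * (2 * S * Q) :=
          mul_le_mul_of_nonneg_left hb hCp_pos.le
      _ = (∏ p ∈ s0, L p) * Q * (2 * S) := by ring
end
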